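/- A σ-maxitive measure τ on a σ-algebra 𝓑 satisfies the Radon–Nikodym property with respect to the Sugeno integral (i.e. every σ-maxitive ν on 𝓑 with ν(B) ≤ τ(B) for all B ∈ 𝓑 admits a 𝓑-measurable c : E → [0,∞] with ν(B) = sup_{t≥0} min(t, τ(B ∩ {c > t})) for all B ∈ 𝓑) if and only if τ is σ-principal. -/

import Mathlib

open scoped ENNReal
open Set Filter MeasureTheory

variable {E : Type*}

/-- `f : E → [0,∞]` is `𝓑`-measurable: `{f > t}` is measurable for every `t`. -/
def Premeasurable [MeasurableSpace E] (f : E → ℝ≥0∞) : Prop :=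
  ∀ t : ℝ≥0∞, MeasurableSet {x | t < f x}

/-- A maxitive measure on the σ-algebra of measurable subsets of `E`. -/
def Maxitive [MeasurableSpace E] (ν : Set E → ℝ≥0∞) : Prop :=
  ν ∅ = 0 ∧ ∀ A B : Set E, MeasurableSet A → MeasurableSet B →
    ν (A ∪ B) = max (ν A) (ν B)

/-- A σ-maxitive measure: a maxitive measure commuting with countable nondecreasing unions. -/
def SigmaMaxitive [MeasurableSpace E] (ν : Set E → ℝ≥0∞) : Prop :=
  Maxitive ν ∧ ∀ B : ℕ → Set E, (∀ n, MeasurableSet (B n)) → Monotone B →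
    ν (⋃ n, B n) = ⨆ n, ν (B n)

/-- `N` is `τ`-negligible: it is contained in a measurable set of `τ`-measure zero. -/
def Negligible [MeasurableSpace E] (τ : Set E → ℝ≥0∞) (N : Set E) : Prop :=
  ∃ B : Set E, MeasurableSet B ∧ N ⊆ B ∧ τ B = 0

/-- The `τ`-essential supremum of `f` over `B`: `inf { t > 0 : B ∩ {f > t} is τ-negligible }`. -/
noncomputable def essSupOn [MeasurableSpace E] (τ : Set E → ℝ≥0∞) (f : E → ℝ≥0∞)
    (B : Set E) : ℝ≥0∞ :=
  sInf {t : ℝ≥0∞ | 0 < t ∧ Negligible τ (B ∩ {x | t < f x})}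

/-- `ν ≪ τ`: absolute continuity. -/
def AbsCont [MeasurableSpace E] (ν τ : Set E → ℝ≥0∞) : Prop :=
  ∀ B : Set E, MeasurableSet B → τ B = 0 → ν B = 0

/-- `ν ⋘ τ`: strong absolute continuity, i.e. `ν` has a measurable relative density
with respect to `τ`. -/
def StrongAbsCont [MeasurableSpace E] (ν τ : Set E → ℝ≥0∞) : Prop :=
  ∃ f : E → ℝ≥0∞, Premeasurable f ∧ ∀ B : Set E, MeasurableSet B → ν B = essSupOn τ f B

/-- `c` is a cardinal density of `ν`: `ν B = sup_{x ∈ B} c x` for every measurable `B`. -/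
def IsCardinalDensity [MeasurableSpace E] (ν : Set E → ℝ≥0∞) (c : E → ℝ≥0∞) : Prop :=
  ∀ B : Set E, MeasurableSet B → ν B = ⨆ x ∈ B, c x

/-- `τ` is essential: there exists a σ-finite σ-additive measure `m` with the same
null measurable sets. -/
def Essential [MeasurableSpace E] (τ : Set E → ℝ≥0∞) : Prop :=
  ∃ m : Measure E, SigmaFinite m ∧ ∀ B : Set E, MeasurableSet B → (0 < τ B ↔ 0 < m B)

/-- A σ-ideal of the σ-algebra of measurable sets. -/
def SigmaIdeal [MeasurableSpace E] (I : Set (Set E)) : Prop :=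
  I.Nonempty ∧ (∀ S ∈ I, MeasurableSet S) ∧
  (∀ f : ℕ → Set E, (∀ n, f n ∈ I) → (⋃ n, f n) ∈ I) ∧
  (∀ B S : Set E, MeasurableSet B → S ∈ I → B ⊆ S → B ∈ I)

/-- `τ` is σ-principal: every σ-ideal has a greatest element modulo `τ`-negligible sets. -/
def SigmaPrincipal [MeasurableSpace E] (τ : Set E → ℝ≥0∞) : Prop :=
  ∀ I : Set (Set E), SigmaIdeal I → ∃ L ∈ I, ∀ S ∈ I, Negligible τ (S \ L)

/-- A pseudo-multiplication on `[0,∞]`. -/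
structure PseudoMul where
  op : ℝ≥0∞ → ℝ≥0∞ → ℝ≥0∞
  assoc : ∀ a b c, op (op a b) c = op a (op b c)
  contOn : ContinuousOn (fun q : ℝ≥0∞ × ℝ≥0∞ => op q.1 q.2) (Set.Ioo 0 ⊤ ×ˢ Set.univ)
  contLeft : ∀ t, ContinuousOn (fun s => op s t) (Set.Ioi 0)
  monoLeft : ∀ t, Monotone fun s => op s t
  monoRight : ∀ s, Monotone (op s)
  one : ℝ≥0∞
  one_op : ∀ t, op one t = t
  eq_zero : ∀ s t, op s t = 0 → s = 0 ∨ t = 0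
  zero_op : ∀ t, op 0 t = 0
  op_zero : ∀ t, op t 0 = 0

/-- `t` is `⊙`-finite: `inf_{s > 0} s ⊙ t = 0`. -/
def OdotFinite (p : PseudoMul) (t : ℝ≥0∞) : Prop :=
  (⨅ s ∈ Set.Ioi (0 : ℝ≥0∞), p.op s t) = 0

/-- The idempotent `⊙`-integral `∫_B f ⊙ dτ = sup_{t ∈ [0,∞)} t ⊙ τ (B ∩ {f > t})`. -/
noncomputable def iInt [MeasurableSpace E] (p : PseudoMul) (τ : Set E → ℝ≥0∞)
    (f : E → ℝ≥0∞) (B : Set E) : ℝ≥0∞ :=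
  ⨆ t ∈ Set.Iio (⊤ : ℝ≥0∞), p.op t (τ (B ∩ {x | t < f x}))

/-- `ν ≪_⊙ τ`: `ν B ≤ ∞ ⊙ τ B` for every measurable `B`. -/
def OdotAbsCont [MeasurableSpace E] (p : PseudoMul) (ν τ : Set E → ℝ≥0∞) : Prop :=
  ∀ B : Set E, MeasurableSet B → ν B ≤ p.op ⊤ (τ B)

/-- `ν` is semi-`⊙`-finite. -/
def SemiOdotFinite [MeasurableSpace E] (p : PseudoMul) (ν : Set E → ℝ≥0∞) : Prop :=
  ∀ B : Set E, MeasurableSet B →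
    ν B = ⨆ A ∈ {A : Set E | MeasurableSet A ∧ A ⊆ B ∧ OdotFinite p (ν A)}, ν A

/-- `τ` is σ-`⊙`-finite. -/
def SigmaOdotFinite [MeasurableSpace E] (p : PseudoMul) (τ : Set E → ℝ≥0∞) : Prop :=
  ∃ B : ℕ → Set E, (∀ n, MeasurableSet (B n)) ∧ (⋃ n, B n) = Set.univ ∧
    ∀ n, OdotFinite p (τ (B n))

/-- Continuity from below. -/
def ContFromBelow [MeasurableSpace E] (ν : Set E → ℝ≥0∞) : Prop :=
  ∀ B : ℕ → Set E, (∀ n, MeasurableSet (B n)) → Monotone B →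
    Tendsto (fun n => ν (B n)) atTop (nhds (ν (⋃ n, B n)))

/-- Continuity from above (no finiteness assumption). -/
def ContFromAbove [MeasurableSpace E] (ν : Set E → ℝ≥0∞) : Prop :=
  ∀ B : ℕ → Set E, (∀ n, MeasurableSet (B n)) → Antitone B →
    Tendsto (fun n => ν (B n)) atTop (nhds (ν (⋂ n, B n)))

/-- An optimal measure: a maxitive measure continuous from below and from above. -/
def Optimal [MeasurableSpace E] (ν : Set E → ℝ≥0∞) : Prop :=
  Maxitive ν ∧ ContFromBelow ν ∧ ContFromAbove ν

/-! Write `∫_B c` for the Sugeno integral of `c` over `B` with respect to `τ`.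

For `⇐`, σ-principality applied to the σ-ideals `{B | ν B ≤ q}`, `q` rational, gives sets
`L q` that are greatest modulo `τ`-null sets; put `c x = inf {q | x ∈ L q}`. Then `ν {c ≤ t} ≤ t`,
so for `t < ν B` maxitivity forces `τ (B ∩ {c > t}) ≥ ν (B ∩ {c > t}) = ν B > t`, giving
`ν B ≤ ∫_B c`; and if `ν B < q < t` then `B ∩ {c > t} ⊆ B \ L q` is `τ`-null, giving `∫_B c ≤ ν B`.

For `⇒`, given a σ-ideal `I`, the set function `ν B = inf_{S ∈ I} τ (B \ S)` is σ-maxitive,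
dominated by `τ` and zero on `I`. Its Sugeno density `c` therefore vanishes `τ`-a.e. on every
member of `I`, while `ν {c = 0} = 0` yields `L ∈ I` with `{c = 0} \ L` `τ`-null; this `L` is
greatest in `I` modulo `τ`-null sets. -/

noncomputable def sugenoIntegral [MeasurableSpace E] (τ : Set E → ℝ≥0∞) (c : E → ℝ≥0∞)
    (B : Set E) : ℝ≥0∞ :=
  ⨆ t ∈ Set.Iio (⊤ : ℝ≥0∞), min t (τ (B ∩ {x | t < c x}))

def SugenoRNProperty [MeasurableSpace E] (τ : Set E → ℝ≥0∞) : Prop :=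
  ∀ ν : Set E → ℝ≥0∞, SigmaMaxitive ν → (∀ B : Set E, MeasurableSet B → ν B ≤ τ B) →
    ∃ c : E → ℝ≥0∞, Premeasurable c ∧ ∀ B : Set E, MeasurableSet B → ν B = sugenoIntegral τ c B

noncomputable def modIdeal (τ : Set E → ℝ≥0∞) (I : Set (Set E)) (B : Set E) : ℝ≥0∞ :=
  ⨅ S ∈ I, τ (B \ S)

noncomputable def levelDensity (L : ℚ → Set E) (x : E) : ℝ≥0∞ :=
  ⨅ (q : ℚ) (_ : x ∈ L q), ENNReal.ofReal q

theorem levelDensity_le {L : ℚ → Set E} {q : ℚ} {x : E} (hx : x ∈ L q) :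
    levelDensity L x ≤ ENNReal.ofReal q :=
  iInf₂_le q hx

section

variable [MeasurableSpace E] {τ ν : Set E → ℝ≥0∞} {I : Set (Set E)}

theorem Measurable.premeasurable {c : E → ℝ≥0∞} (hc : Measurable c) : Premeasurable c :=
  fun _ => measurableSet_lt measurable_const hc

theorem Maxitive.mono (hν : Maxitive ν) {A B : Set E} (hA : MeasurableSet A)
    (hB : MeasurableSet B) (hAB : A ⊆ B) : ν A ≤ ν B := by
  rw [← Set.union_eq_self_of_subset_left hAB, hν.2 A B hA hB]
  exact le_max_left _ _

theorem Maxitive.union_eq_zero (hν : Maxitive ν) {A B : Set E} (hA : MeasurableSet A)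
    (hB : MeasurableSet B) (hA0 : ν A = 0) (hB0 : ν B = 0) : ν (A ∪ B) = 0 := by
  rw [hν.2 A B hA hB, hA0, hB0, max_self]

theorem measurableSet_accumulate {f : ℕ → Set E} (hf : ∀ n, MeasurableSet (f n)) (n : ℕ) :
    MeasurableSet (Set.accumulate f n) :=
  .biUnion (Set.to_countable _) fun k _ => hf k

theorem Maxitive.apply_accumulate_le (hν : Maxitive ν) {f : ℕ → Set E}
    (hf : ∀ n, MeasurableSet (f n)) (n : ℕ) : ν (Set.accumulate f n) ≤ ⨆ k, ν (f k) := by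
  induction n with
  | zero => simp [Set.accumulate_def, le_iSup (fun k => ν (f k)) 0]
  | succ n ih =>
    rw [Set.accumulate_succ, hν.2 _ _ (measurableSet_accumulate hf n) (hf _)]
    exact max_le ih (le_iSup (fun k => ν (f k)) _)

theorem SigmaMaxitive.apply_iUnion_le {ι : Type*} [Countable ι] (hν : SigmaMaxitive ν)
    {f : ι → Set E} (hf : ∀ i, MeasurableSet (f i)) : ν (⋃ i, f i) ≤ ⨆ i, ν (f i) := by
  rcases isEmpty_or_nonempty ι with hι | hι
  · simp [hν.1.1]
  obtain ⟨g, hg⟩ := exists_surjective_nat ι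
  rw [← hg.iUnion_comp, ← hg.iSup_comp, ← Set.iUnion_accumulate,
    hν.2 _ (measurableSet_accumulate fun n => hf (g n)) Set.monotone_accumulate]
  exact iSup_le (hν.1.apply_accumulate_le fun n => hf (g n))

theorem SigmaIdeal.measurableSet (hI : SigmaIdeal I) {S : Set E} (hS : S ∈ I) :
    MeasurableSet S :=
  hI.2.1 S hS

theorem SigmaIdeal.empty_mem (hI : SigmaIdeal I) : ∅ ∈ I := by
  obtain ⟨⟨S, hS⟩, -, -, hdown⟩ := hI
  exact hdown ∅ S MeasurableSet.empty hS (Set.empty_subset S)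

theorem SigmaIdeal.iUnion_mem {ι : Type*} [Countable ι] (hI : SigmaIdeal I) {f : ι → Set E}
    (hf : ∀ i, f i ∈ I) : (⋃ i, f i) ∈ I := by
  rcases isEmpty_or_nonempty ι with hι | hι
  · simpa using hI.empty_mem
  obtain ⟨g, hg⟩ := exists_surjective_nat ι
  rw [← hg.iUnion_comp]
  exact hI.2.2.1 _ fun n => hf (g n)

theorem sigmaIdeal_setOf_le (hν : SigmaMaxitive ν) (a : ℝ≥0∞) :
    SigmaIdeal {B : Set E | MeasurableSet B ∧ ν B ≤ a} := by
  refine ⟨⟨∅, MeasurableSet.empty, by simp [hν.1.1]⟩, fun S hS => hS.1, fun f hf => ?_,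
    fun B S hB hS hBS => ⟨hB, (hν.1.mono hB hS.1 hBS).trans hS.2⟩⟩
  exact ⟨.iUnion fun n => (hf n).1, (hν.apply_iUnion_le fun n => (hf n).1).trans
    (iSup_le fun n => (hf n).2)⟩

theorem modIdeal_le (hI : SigmaIdeal I) (B : Set E) : modIdeal τ I B ≤ τ B :=
  iInf₂_le_of_le ∅ hI.empty_mem (by rw [Set.sdiff_empty])

theorem modIdeal_eq_zero_of_mem (hτ : Maxitive τ) {S : Set E} (hS : S ∈ I) :
    modIdeal τ I S = 0 :=
  nonpos_iff_eq_zero.1 <| iInf₂_le_of_le S hS (by rw [Set.sdiff_self, hτ.1])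

theorem modIdeal_mono (hτ : Maxitive τ) (hI : SigmaIdeal I) {A B : Set E}
    (hA : MeasurableSet A) (hB : MeasurableSet B) (hAB : A ⊆ B) :
    modIdeal τ I A ≤ modIdeal τ I B :=
  iInf₂_mono fun _ hS => hτ.mono (hA.diff (hI.measurableSet hS)) (hB.diff (hI.measurableSet hS))
    (Set.sdiff_subset_sdiff_left hAB)

theorem modIdeal_iUnion_le {ι : Type*} [Countable ι] (hτ : SigmaMaxitive τ)
    (hI : SigmaIdeal I) {f : ι → Set E} (hf : ∀ i, MeasurableSet (f i)) :
    modIdeal τ I (⋃ i, f i) ≤ ⨆ i, modIdeal τ I (f i) := by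
  refine le_of_forall_gt_imp_ge_of_dense fun w hw => ?_
  have hlt : ∀ i, ∃ S ∈ I, τ (f i \ S) < w := fun i =>
    by simpa only [modIdeal, iInf_lt_iff, exists_prop] using (le_iSup _ i).trans_lt hw
  choose S hSI hSw using hlt
  -- a single member of `I` absorbs all the witnesses `S i` at once
  have hU : (⋃ i, S i) ∈ I := hI.iUnion_mem hSI
  have hUm := hI.measurableSet hU
  refine iInf₂_le_of_le _ hU ?_
  rw [Set.iUnion_sdiff]
  refine (hτ.apply_iUnion_le fun i => (hf i).diff hUm).trans (iSup_le fun i => ?_)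
  exact (hτ.1.mono ((hf i).diff hUm) ((hf i).diff (hI.measurableSet (hSI i)))
    (Set.sdiff_subset_sdiff_right (Set.subset_iUnion S i))).trans (hSw i).le

theorem sigmaMaxitive_modIdeal (hτ : SigmaMaxitive τ) (hI : SigmaIdeal I) :
    SigmaMaxitive (modIdeal τ I) := by
  refine ⟨⟨modIdeal_eq_zero_of_mem hτ.1 hI.empty_mem, fun A B hA hB => ?_⟩, fun B hB _ => ?_⟩
  · refine le_antisymm ?_ (max_le (modIdeal_mono hτ.1 hI hA (hA.union hB) Set.subset_union_left)
      (modIdeal_mono hτ.1 hI hB (hA.union hB) Set.subset_union_right))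
    rw [Set.union_eq_iUnion]
    exact (modIdeal_iUnion_le hτ hI fun b => by cases b <;> assumption).trans_eq iSup_bool_eq
  · exact le_antisymm (modIdeal_iUnion_le hτ hI hB)
      (iSup_le fun n => modIdeal_mono hτ.1 hI (hB n) (.iUnion hB) (Set.subset_iUnion B n))

theorem exists_mem_diff_eq_zero_of_modIdeal_eq_zero (hτ : Maxitive τ) (hI : SigmaIdeal I)
    {B : Set E} (hB : MeasurableSet B) (h : modIdeal τ I B = 0) : ∃ L ∈ I, τ (B \ L) = 0 := by
  have hlt : ∀ n : ℕ, ∃ S ∈ I, τ (B \ S) < (n : ℝ≥0∞)⁻¹ := fun n => by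
    simpa only [modIdeal, iInf_lt_iff, exists_prop] using
      h.trans_lt (ENNReal.inv_pos.2 (ENNReal.natCast_ne_top n))
  choose S hSI hSlt using hlt
  have hL : (⋃ n, S n) ∈ I := hI.iUnion_mem hSI
  refine ⟨⋃ n, S n, hL, by_contra fun hne => ?_⟩
  obtain ⟨n, hn⟩ := ENNReal.exists_inv_nat_lt hne
  refine (hn.trans_le ?_).not_gt (hSlt n)
  exact hτ.mono (hB.diff (hI.measurableSet hL)) (hB.diff (hI.measurableSet (hSI n)))
    (Set.sdiff_subset_sdiff_right (Set.subset_iUnion S n))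

theorem sugenoIntegral_le {c : E → ℝ≥0∞} {B : Set E} {a : ℝ≥0∞}
    (h : ∀ t < ⊤, a < t → τ (B ∩ {x | t < c x}) = 0) : sugenoIntegral τ c B ≤ a := by
  refine iSup₂_le fun t ht => ?_
  rcases le_or_gt t a with hta | hat
  · exact (min_le_left _ _).trans hta
  · simp [h t ht hat]

theorem le_sugenoIntegral {c : E → ℝ≥0∞} {B : Set E} {a : ℝ≥0∞}
    (h : ∀ t < a, t ≤ τ (B ∩ {x | t < c x})) : a ≤ sugenoIntegral τ c B :=
  le_of_forall_lt_imp_le_of_dense fun t hta =>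
    le_iSup₂_of_le (f := fun t _ => min t (τ (B ∩ {x | t < c x}))) t (hta.trans_le le_top)
      (le_min le_rfl (h t hta))

theorem apply_inter_pos_eq_zero_of_sugenoIntegral_eq_zero (hτ : SigmaMaxitive τ)
    {c : E → ℝ≥0∞} (hc : Premeasurable c) {B : Set E} (hB : MeasurableSet B)
    (h : sugenoIntegral τ c B = 0) : τ (B ∩ {x | 0 < c x}) = 0 := by
  have hnull : ∀ n : ℕ, τ (B ∩ {x | ((n : ℝ≥0∞) + 1)⁻¹ < c x}) = 0 := fun n => by
    have := (le_iSup₂ (f := fun t _ => min t (τ (B ∩ {x | t < c x}))) ((n : ℝ≥0∞) + 1)⁻¹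
      (ENNReal.inv_lt_top.2 (by positivity))).trans h.le
    simpa [min_le_iff, ENNReal.inv_ne_zero] using this
  have hU : B ∩ {x | 0 < c x} = ⋃ n : ℕ, B ∩ {x | ((n : ℝ≥0∞) + 1)⁻¹ < c x} := by
    rw [← Set.inter_iUnion]
    refine congrArg (B ∩ ·) (Set.ext fun x => ⟨fun hx => ?_, fun hx => ?_⟩)
    · obtain ⟨n, hn⟩ := ENNReal.exists_inv_nat_lt hx.ne'
      exact Set.mem_iUnion.2 ⟨n, lt_of_le_of_lt (ENNReal.inv_le_inv.2 le_self_add) hn⟩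
    · obtain ⟨n, hn⟩ := Set.mem_iUnion.1 hx
      exact lt_of_le_of_lt zero_le (show (↑n + 1)⁻¹ < c x from hn)
  rw [hU]
  exact nonpos_iff_eq_zero.1 <| (hτ.apply_iUnion_le fun n => hB.inter (hc _)).trans
    (by simp [hnull])

theorem le_sugenoIntegral_of_apply_setOf_le (hν : Maxitive ν)
    (hντ : ∀ B : Set E, MeasurableSet B → ν B ≤ τ B) {c : E → ℝ≥0∞} (hc : Measurable c)
    (hlev : ∀ t, ν {x | c x ≤ t} ≤ t) {B : Set E} (hB : MeasurableSet B) :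
    ν B ≤ sugenoIntegral τ c B := by
  refine le_sugenoIntegral fun t ht => ?_
  have hle : MeasurableSet {x | c x ≤ t} := measurableSet_le hc measurable_const
  have hgt : MeasurableSet (B ∩ {x | t < c x}) := hB.inter (measurableSet_lt measurable_const hc)
  have hcover : B ⊆ {x | c x ≤ t} ∪ (B ∩ {x | t < c x}) := fun x hx =>
    (le_or_gt (c x) t).imp id (⟨hx, ·⟩)
  have hνB : ν B ≤ max (ν {x | c x ≤ t}) (ν (B ∩ {x | t < c x})) :=
    (hν.mono hB (hle.union hgt) hcover).trans_eq (hν.2 _ _ hle hgt)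
  have : ν B ≤ ν (B ∩ {x | t < c x}) :=
    (le_max_iff.1 hνB).resolve_left fun h => (h.trans (hlev t)).not_gt ht
  exact ht.le.trans (this.trans (hντ _ hgt))

theorem measurable_levelDensity {L : ℚ → Set E} (hL : ∀ q, MeasurableSet (L q)) :
    Measurable (levelDensity L) := by
  classical
  refine Measurable.iInf fun q => ?_
  simp only [iInf_eq_if]
  exact Measurable.ite (hL q) measurable_const measurable_const

theorem apply_setOf_levelDensity_le (hν : SigmaMaxitive ν) {L : ℚ → Set E}
    (hL : ∀ q, MeasurableSet (L q)) (hLν : ∀ q, ν (L q) ≤ ENNReal.ofReal q) (t : ℝ≥0∞) :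
    ν {x | levelDensity L x ≤ t} ≤ t := by
  refine le_of_forall_gt_imp_ge_of_dense fun r htr => ?_
  have hsub : {x | levelDensity L x ≤ t} ⊆ ⋃ (q : ℚ) (_ : ENNReal.ofReal q < r), L q := by
    intro x hx
    obtain ⟨q, hxq, hqr⟩ : ∃ q : ℚ, x ∈ L q ∧ ENNReal.ofReal q < r := by
      simpa only [levelDensity, iInf_lt_iff, exists_prop] using
        (show levelDensity L x ≤ t from hx).trans_lt htr
    exact Set.mem_biUnion (x := q) hqr hxq
  have hUm : ∀ q : ℚ, MeasurableSet (⋃ (_ : ENNReal.ofReal q < r), L q) :=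
    fun q => .iUnion fun _ => hL q
  refine (hν.1.mono (measurableSet_le (measurable_levelDensity hL) measurable_const)
    (.iUnion hUm) hsub).trans ((hν.apply_iUnion_le hUm).trans (iSup_le fun q => ?_))
  by_cases hqr : ENNReal.ofReal q < r
  · simpa only [hqr, Set.iUnion_true] using (hLν q).trans hqr.le
  · simp only [hqr, Set.iUnion_false, hν.1.1, zero_le]

theorem SigmaPrincipal.sugenoRNProperty (hτ : Maxitive τ) (hp : SigmaPrincipal τ) :
    SugenoRNProperty τ := by
  intro ν hν hντ
  choose L hL hmax using fun q : ℚ => hp _ (sigmaIdeal_setOf_le hν (ENNReal.ofReal q))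
  have hLm : ∀ q, MeasurableSet (L q) := fun q => (hL q).1
  have hc := measurable_levelDensity hLm
  refine ⟨levelDensity L, hc.premeasurable, fun B hB => le_antisymm
    (le_sugenoIntegral_of_apply_setOf_le hν.1 hντ hc
      (apply_setOf_levelDensity_le hν hLm fun q => (hL q).2) hB)
    (sugenoIntegral_le fun t _ hBt => ?_)⟩
  obtain ⟨q, -, hBq, hqt⟩ := ENNReal.lt_iff_exists_rat_btwn.1 hBt
  obtain ⟨N, hNm, hBN, hN0⟩ := hmax q B ⟨hB, hBq.le⟩
  have hsub : B ∩ {x | t < levelDensity L x} ⊆ N := fun x ⟨hxB, hxt⟩ =>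
    hBN ⟨hxB, fun hxL => lt_asymm hxt ((levelDensity_le hxL).trans_lt hqt)⟩
  exact nonpos_iff_eq_zero.1 (hN0 ▸ hτ.mono (hB.inter (hc.premeasurable t)) hNm hsub)

theorem SugenoRNProperty.sigmaPrincipal (hτ : SigmaMaxitive τ) (h : SugenoRNProperty τ) :
    SigmaPrincipal τ := by
  intro I hI
  obtain ⟨c, hc, hrep⟩ := h _ (sigmaMaxitive_modIdeal hτ hI) fun B _ => modIdeal_le hI B
  have hpos : ∀ S ∈ I, τ (S ∩ {x | 0 < c x}) = 0 := fun S hS =>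
    apply_inter_pos_eq_zero_of_sugenoIntegral_eq_zero hτ hc (hI.measurableSet hS)
      ((hrep S (hI.measurableSet hS)).symm.trans (modIdeal_eq_zero_of_mem hτ.1 hS))
  set Z := {x | 0 < c x}ᶜ
  have hZm : MeasurableSet Z := (hc 0).compl
  have hZ : modIdeal τ I Z = 0 := by
    refine (hrep Z hZm).trans (nonpos_iff_eq_zero.1 (sugenoIntegral_le fun t _ _ => ?_))
    have hempty : Z ∩ {x | t < c x} = ∅ := Set.eq_empty_of_forall_notMem fun x ⟨hxZ, hxt⟩ =>
      hxZ (show 0 < c x from lt_of_le_of_lt zero_le hxt)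
    rw [hempty, hτ.1.1]
  obtain ⟨L, hL, hZL⟩ := exists_mem_diff_eq_zero_of_modIdeal_eq_zero hτ.1 hI hZm hZ
  refine ⟨L, hL, fun S hS => ?_⟩
  have hSc := (hI.measurableSet hS).inter (hc 0)
  have hZL' := hZm.diff (hI.measurableSet hL)
  refine ⟨_, hSc.union hZL', fun x ⟨hxS, hxL⟩ => ?_, hτ.1.union_eq_zero hSc hZL' (hpos S hS) hZL⟩
  by_cases hx : 0 < c x
  exacts [Or.inl ⟨hxS, hx⟩, Or.inr ⟨hx, hxL⟩]

end

/-- A σ-maxitive measure `τ` has the Radon–Nikodym property with respect to the Sugeno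
integral iff it is σ-principal. -/
theorem sugeno_rnProperty_iff [MeasurableSpace E] (τ : Set E → ℝ≥0∞)
    (hτ : SigmaMaxitive τ) :
    (∀ ν : Set E → ℝ≥0∞, SigmaMaxitive ν →
        (∀ B : Set E, MeasurableSet B → ν B ≤ τ B) →
        ∃ c : E → ℝ≥0∞, Premeasurable c ∧ ∀ B : Set E, MeasurableSet B →
          ν B = ⨆ t ∈ Set.Iio (⊤ : ℝ≥0∞), min t (τ (B ∩ {x | t < c x}))) ↔
    SigmaPrincipal τ :=
  ⟨SugenoRNProperty.sigmaPrincipal hτ, SigmaPrincipal.sugenoRNProperty hτ.1⟩
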